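/- Let A_c be the community membership matrix of a partition of n nodes into K clusters, and let A_c^{(s)} be an s-regular graph on the same node set whose connected components form a refinement of the partition defining A_c (i.e., each connected component of A_c^{(s)} is contained in a single cluster of A_c). Then the largest eigenvalue of both Â(A_c) and Â(A_c^{(s)}) equals 1, the multiplicity of eigenvalue 1 of Â(A_c^{(s)}) is at least the multiplicity of eigenvalue 1 of Â(A_c), and every eigenvector of Â(A_c) with eigenvalue 1 is also an eigenvector of Â(A_c^{(s)}) with eigenvalue 1. -/

import Mathlib

open Matrix Polynomial Finset

section Helpers

variable {m : ℕ}

lemma charmatrix_map_eval (M : Matrix (Fin m) (Fin m) ℝ) (μ : ℝ) :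
    (charmatrix M).map (Polynomial.eval μ) = μ • (1 : Matrix (Fin m) (Fin m) ℝ) - M := by
  ext i j
  rcases eq_or_ne i j with h | h
  · subst h
    simp [charmatrix_apply_eq, Matrix.one_apply]
  · simp [charmatrix_apply_ne M i j h, Matrix.one_apply_ne h]

lemma isRoot_charpoly_iff (M : Matrix (Fin m) (Fin m) ℝ) (μ : ℝ) :
    M.charpoly.IsRoot μ ↔ ∃ v : Fin m → ℝ, v ≠ 0 ∧ M *ᵥ v = μ • v := by
  have h1 : M.charpoly.eval μ = (μ • (1 : Matrix (Fin m) (Fin m) ℝ) - M).det := by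
    rw [Matrix.charpoly, ← charmatrix_map_eval M μ]
    exact (RingHom.map_det (Polynomial.evalRingHom μ) (charmatrix M))
  constructor
  · intro h
    have hd : (μ • (1 : Matrix (Fin m) (Fin m) ℝ) - M).det = 0 := by
      rw [← h1]; exact h
    obtain ⟨v, hv0, hv⟩ := Matrix.exists_mulVec_eq_zero_iff.2 hd
    refine ⟨v, hv0, ?_⟩
    have := hv
    rw [Matrix.sub_mulVec, Matrix.smul_mulVec, Matrix.one_mulVec, sub_eq_zero] at this
    exact this.symm
  · rintro ⟨v, hv0, hv⟩
    have hd : (μ • (1 : Matrix (Fin m) (Fin m) ℝ) - M).det = 0 := by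
      rw [← Matrix.exists_mulVec_eq_zero_iff]
      exact ⟨v, hv0, by rw [Matrix.sub_mulVec, Matrix.smul_mulVec, Matrix.one_mulVec, hv,
        sub_self]⟩
    rw [Polynomial.IsRoot, h1, hd]

lemma charpoly_unit_conj (U D : Matrix (Fin m) (Fin m) ℝ) (h1 : U * star U = 1)
    (h2 : star U * U = 1) : (U * D * star U).charpoly = D.charpoly := by
  set f : Matrix (Fin m) (Fin m) ℝ →+* Matrix (Fin m) (Fin m) ℝ[X] :=
    (Polynomial.C : ℝ →+* ℝ[X]).mapMatrix with hf
  have hf1 : f U * f (star U) = 1 := by rw [← _root_.map_mul, h1, _root_.map_one]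
  have hf2 : f (star U) * f U = 1 := by rw [← _root_.map_mul, h2, _root_.map_one]
  have key : charmatrix (U * D * star U) = f U * charmatrix D * f (star U) := by
    rw [charmatrix, charmatrix, _root_.map_mul, _root_.map_mul, Matrix.mul_sub, Matrix.sub_mul]
    congr 1
    rw [← ((Matrix.scalar_commute (X : ℝ[X]) (fun r' => Commute.all _ _)) (f U)).eq, mul_assoc,
      hf1, mul_one]
  rw [Matrix.charpoly, Matrix.charpoly, key, det_mul, det_mul, mul_comm, ← mul_assoc, ← det_mul,
    hf2, det_one, one_mul]

lemma charpoly_diagonal_eq (w : Fin m → ℝ) :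
    (Matrix.diagonal w).charpoly = ∏ i, (X - C (w i)) := by
  have h : charmatrix (Matrix.diagonal w) = Matrix.diagonal (fun i => X - C (w i)) := by
    ext i j
    rcases eq_or_ne i j with h | h
    · subst h; simp [charmatrix_apply_eq]
    · simp [charmatrix_apply_ne _ _ _ h, Matrix.diagonal_apply_ne _ h]
  rw [Matrix.charpoly, h, Matrix.det_diagonal]

lemma hermitian_charpoly_eq (M : Matrix (Fin m) (Fin m) ℝ) (hM : M.IsHermitian) :
    M.charpoly = ∏ i, (X - C (hM.eigenvalues i)) := by
  have hU : M = (hM.eigenvectorUnitary : Matrix (Fin m) (Fin m) ℝ) *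
      Matrix.diagonal hM.eigenvalues * star (hM.eigenvectorUnitary : Matrix (Fin m) (Fin m) ℝ) :=
    hM.spectral_theorem
  conv_lhs => rw [hU]
  rw [charpoly_unit_conj _ _ (Matrix.mem_unitaryGroup_iff.mp hM.eigenvectorUnitary.2)
    (Matrix.mem_unitaryGroup_iff'.mp hM.eigenvectorUnitary.2), charpoly_diagonal_eq]

lemma rootMult_prod (w : Fin m → ℝ) (μ : ℝ) :
    (∏ i, (X - C (w i))).rootMultiplicity μ = (univ.filter (fun i => w i = μ)).card := by
  have h : (∏ i, (X - C (w i))) = ((univ.val.map w).map (fun a => X - C a)).prod := by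
    rw [Multiset.map_map]; rfl
  rw [← Polynomial.count_roots, h, Polynomial.roots_multiset_prod_X_sub_C, Multiset.count_map]
  have heq : Multiset.filter (fun a => μ = w a) univ.val
      = Multiset.filter (fun a => w a = μ) univ.val :=
    Multiset.filter_congr (fun x _ => eq_comm)
  rw [heq]
  rfl

noncomputable def eigSp (M : Matrix (Fin m) (Fin m) ℝ) (μ : ℝ) : Submodule ℝ (Fin m → ℝ) :=
  LinearMap.ker (M - μ • 1).mulVecLin

lemma mem_eigSp {M : Matrix (Fin m) (Fin m) ℝ} {μ : ℝ} {v : Fin m → ℝ} :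
    v ∈ eigSp M μ ↔ M *ᵥ v = μ • v := by
  rw [eigSp, LinearMap.mem_ker, Matrix.mulVecLin_apply, Matrix.sub_mulVec,
    Matrix.smul_mulVec, Matrix.one_mulVec, sub_eq_zero]

lemma finrank_eigSp (M : Matrix (Fin m) (Fin m) ℝ) (hM : M.IsHermitian) (μ : ℝ) :
    Module.finrank ℝ (eigSp M μ) = (univ.filter (fun i => hM.eigenvalues i = μ)).card := by
  set U : Matrix (Fin m) (Fin m) ℝ := (hM.eigenvectorUnitary : Matrix (Fin m) (Fin m) ℝ) with hUdef
  have h1 : U * star U = 1 := Matrix.mem_unitaryGroup_iff.mp hM.eigenvectorUnitary.2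
  have h2 : star U * U = 1 := Matrix.mem_unitaryGroup_iff'.mp hM.eigenvectorUnitary.2
  have hUdet : IsUnit U.det := by
    apply IsUnit.of_mul_eq_one (star U).det
    rw [← det_mul, h1, det_one]
  have hsUdet : IsUnit (star U).det := by
    apply IsUnit.of_mul_eq_one U.det
    rw [← det_mul, h2, det_one]
  have hspec : M - μ • 1 = U * Matrix.diagonal (fun i => hM.eigenvalues i - μ) * star U := by
    have hsm : (μ • 1 : Matrix (Fin m) (Fin m) ℝ) = U * (μ • 1) * star U := by
      rw [Matrix.mul_smul, Matrix.mul_one, Matrix.smul_mul, h1]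
    conv_lhs => rw [hM.spectral_theorem, Unitary.conjStarAlgAut_apply, hsm]
    rw [← Matrix.sub_mul, ← Matrix.mul_sub]
    congr 2
    have : (μ • 1 : Matrix (Fin m) (Fin m) ℝ) = Matrix.diagonal (fun _ => μ) := by
      ext i j
      rcases eq_or_ne i j with h | h <;>
        simp [h, Matrix.one_apply, Matrix.diagonal_apply]
    rw [this, Matrix.diagonal_sub]
    rfl
  have hrank : (M - μ • 1).rank = (univ.filter (fun i => ¬ hM.eigenvalues i = μ)).card := by
    rw [hspec, Matrix.rank_mul_eq_left_of_isUnit_det _ _ hsUdet,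
      Matrix.rank_mul_eq_right_of_isUnit_det _ _ hUdet, Matrix.rank_diagonal,
      Fintype.card_subtype]
    congr 1
    apply Finset.filter_congr
    intro i _
    simp [sub_eq_zero]
  have hrn : (M - μ • 1).rank + Module.finrank ℝ (eigSp M μ) = m := by
    have := LinearMap.finrank_range_add_finrank_ker (M - μ • 1).mulVecLin
    rw [Module.finrank_pi] at this
    rw [Matrix.rank, eigSp]
    rw [Fintype.card_fin] at this
    convert this using 3
  have hcard := Finset.card_filter_add_card_filter_not
    (s := (univ : Finset (Fin m))) (fun i => hM.eigenvalues i = μ)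
  rw [Finset.card_univ, Fintype.card_fin] at hcard
  omega

end Helpers

/-- The GCN message passing operator Â(B) = (D_B+I)^{-1/2}(B+I)(D_B+I)^{-1/2}. -/
noncomputable def msgOp {n : ℕ} (B : Matrix (Fin n) (Fin n) ℝ) :
    Matrix (Fin n) (Fin n) ℝ :=
  Matrix.of fun i j =>
    (Real.sqrt ((∑ h, B i h) + 1))⁻¹ * ((B + 1) i j) *
    (Real.sqrt ((∑ h, B j h) + 1))⁻¹

/-- If the connected components of the s-regular graph A_c^{(s)} refine the
partition defining A_c, then the largest eigenvalue of both Â(A_c) and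
Â(A_c^{(s)}) equals 1, the multiplicity of eigenvalue 1 of Â(A_c^{(s)}) is at
least that of Â(A_c), and every eigenvector of Â(A_c) with eigenvalue 1 is an
eigenvector of Â(A_c^{(s)}) with eigenvalue 1. -/
theorem stmt_13 (n K s : ℕ) (hn : 0 < n)
    (c : Fin n → Fin K) (hc : Function.Surjective c)
    (Ac : Matrix (Fin n) (Fin n) ℝ)
    (hAc : ∀ i j, Ac i j = if i ≠ j ∧ c i = c j then 1 else 0)
    (G : SimpleGraph (Fin n)) [DecidableRel G.Adj]
    (hreg : G.IsRegularOfDegree s)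
    (hrefine : ∀ i j, G.Reachable i j → c i = c j)
    (As : Matrix (Fin n) (Fin n) ℝ)
    (hAs : As = G.adjMatrix ℝ) :
    ((Matrix.charpoly (msgOp Ac)).IsRoot 1 ∧
      ∀ μ : ℝ, (Matrix.charpoly (msgOp Ac)).IsRoot μ → μ ≤ 1) ∧
    ((Matrix.charpoly (msgOp As)).IsRoot 1 ∧
      ∀ μ : ℝ, (Matrix.charpoly (msgOp As)).IsRoot μ → μ ≤ 1) ∧
    (Matrix.charpoly (msgOp Ac)).rootMultiplicity 1 ≤
      (Matrix.charpoly (msgOp As)).rootMultiplicity 1 ∧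
    ∀ v : Fin n → ℝ, msgOp Ac *ᵥ v = (1 : ℝ) • v →
      msgOp As *ᵥ v = (1 : ℝ) • v := by
  subst hAs
  set A : Matrix (Fin n) (Fin n) ℝ := G.adjMatrix ℝ with hA
  set N : Fin n → ℝ := fun i => ((univ.filter fun h => c h = c i).card : ℝ) with hNdef
  have hN0 : ∀ i, 0 < N i := by
    intro i
    have hi : i ∈ univ.filter fun h => c h = c i := by simp
    have h2 := Finset.card_pos.mpr ⟨i, hi⟩
    have h3 : (0:ℝ) < ((univ.filter fun h => c h = c i).card : ℝ) := by exact_mod_cast h2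
    exact h3
  have hNsame : ∀ i j, c i = c j → N i = N j := by
    intro i j h
    simp only [hNdef]
    congr 2
    apply Finset.filter_congr
    intro x _
    rw [h]
  have hrow1 : ∀ i, (∑ h, Ac i h) + 1 = N i := by
    intro i
    have hpt : ∀ h, (if c h = c i then (1:ℝ) else 0) = Ac i h + (if h = i then 1 else 0) := by
      intro h
      rw [hAc]
      rcases eq_or_ne h i with rfl | hne
      · simp
      · have h1 : (i ≠ h ∧ c i = c h) ↔ (c h = c i) := by
          constructor
          · rintro ⟨_, hh⟩; exact hh.symm
          · intro hh; exact ⟨Ne.symm hne, hh.symm⟩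
        simp [hne, h1]
    calc (∑ h, Ac i h) + 1 = ∑ h, (Ac i h + if h = i then 1 else 0) := by
          rw [Finset.sum_add_distrib]
          congr 1
          simp
      _ = ∑ h, (if c h = c i then (1:ℝ) else 0) := by
          exact (Finset.sum_congr rfl (fun h _ => (hpt h).symm))
      _ = N i := by rw [Finset.sum_boole]
  have hMc : ∀ i j, msgOp Ac i j
      = if c i = c j then (Real.sqrt (N i))⁻¹ * (Real.sqrt (N j))⁻¹ else 0 := by
    intro i j
    have he : (Ac + 1) i j = if c i = c j then (1:ℝ) else 0 := by
      rcases eq_or_ne i j with rfl | hne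
      · simp [Matrix.add_apply, hAc, Matrix.one_apply]
      · simp [Matrix.add_apply, hAc, hne, Matrix.one_apply_ne hne]
    simp only [msgOp, Matrix.of_apply]
    rw [hrow1 i, hrow1 j, he]
    rcases eq_or_ne (c i) (c j) with h | h
    · rw [if_pos h, if_pos h, mul_one]
    · rw [if_neg h, if_neg h, mul_zero, zero_mul]
  have hMcNN : ∀ i j, c i = c j → msgOp Ac i j = (N i)⁻¹ := by
    intro i j h
    rw [hMc, if_pos h, ← hNsame i j h, ← mul_inv, Real.mul_self_sqrt (hN0 i).le]
  have hMc0 : ∀ i j, ¬ c i = c j → msgOp Ac i j = 0 := by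
    intro i j h
    rw [hMc, if_neg h]
  have hrowA : ∀ i, ∑ h, A i h = (s : ℝ) := by
    intro i
    have h1 : ∑ h, A i h = ((G.neighborFinset i).card : ℝ) := by
      simp [hA, SimpleGraph.adjMatrix_apply, SimpleGraph.neighborFinset_eq_filter,
        Finset.sum_boole]
    rw [h1]
    norm_cast
    exact hreg i
  have hs1 : (0:ℝ) < (s:ℝ) + 1 := by positivity
  have hMs : msgOp A = ((s:ℝ)+1)⁻¹ • (A + 1) := by
    ext i j
    simp only [msgOp, Matrix.of_apply, Matrix.smul_apply, smul_eq_mul, hrowA]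
    rw [mul_right_comm, ← mul_inv, Real.mul_self_sqrt hs1.le]
  have hH1 : (msgOp Ac).IsHermitian := by
    show (msgOp Ac)ᴴ = msgOp Ac
    apply Matrix.ext
    intro i j
    rw [Matrix.conjTranspose_apply, star_trivial, hMc, hMc]
    rcases eq_or_ne (c i) (c j) with h | h
    · rw [if_pos h.symm, if_pos h, mul_comm]
    · rw [if_neg (fun hh => h hh.symm), if_neg h]
  have hsymm : ∀ i j, A i j = A j i := by
    intro i j
    simp [hA, SimpleGraph.adjMatrix_apply, G.adj_comm]
  have hH2 : (msgOp A).IsHermitian := by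
    show (msgOp A)ᴴ = msgOp A
    apply Matrix.ext
    intro i j
    rw [Matrix.conjTranspose_apply, star_trivial, hMs]
    simp only [Matrix.smul_apply, Matrix.add_apply, smul_eq_mul]
    rcases eq_or_ne i j with rfl | h
    · rfl
    · rw [Matrix.one_apply_ne h, Matrix.one_apply_ne (Ne.symm h), hsymm j i]
  -- the eigenvector transfer
  have keyD : ∀ v : Fin n → ℝ, msgOp Ac *ᵥ v = (1 : ℝ) • v → msgOp A *ᵥ v = (1 : ℝ) • v := by
    intro v hv
    rw [one_smul] at hv ⊢
    have hvi : ∀ i, v i = (N i)⁻¹ * ∑ j ∈ univ.filter (fun j => c j = c i), v j := by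
      intro i
      have hterm : ∀ j, msgOp Ac i j * v j = if c j = c i then (N i)⁻¹ * v j else 0 := by
        intro j
        rcases eq_or_ne (c j) (c i) with h | h
        · rw [if_pos h, hMcNN i j h.symm]
        · rw [if_neg h, hMc0 i j (fun hh => h hh.symm), zero_mul]
      calc v i = (msgOp Ac *ᵥ v) i := by rw [hv]
        _ = ∑ j, msgOp Ac i j * v j := rfl
        _ = ∑ j, if c j = c i then (N i)⁻¹ * v j else 0 :=
            Finset.sum_congr rfl (fun j _ => hterm j)
        _ = ∑ j ∈ univ.filter (fun j => c j = c i), (N i)⁻¹ * v j :=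
            (Finset.sum_filter _ _).symm
        _ = (N i)⁻¹ * ∑ j ∈ univ.filter (fun j => c j = c i), v j := by
            rw [Finset.mul_sum]
    have hconst : ∀ i j, c i = c j → v i = v j := by
      intro i j h
      rw [hvi i, hvi j, hNsame i j h, h]
    funext i
    have hAv : (A *ᵥ v) i = (s : ℝ) * v i := by
      have hterm : ∀ j, A i j * v j = A i j * v i := by
        intro j
        rcases em (G.Adj i j) with h | h
        · rw [hconst j i (hrefine j i (G.adj_symm h).reachable)]
        · simp [hA, SimpleGraph.adjMatrix_apply, h]
      calc (A *ᵥ v) i = ∑ j, A i j * v j := rfl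
        _ = ∑ j, A i j * v i := Finset.sum_congr rfl (fun j _ => hterm j)
        _ = (∑ j, A i j) * v i := by rw [Finset.sum_mul]
        _ = (s : ℝ) * v i := by rw [hrowA i]
    rw [hMs, Matrix.smul_mulVec, Matrix.add_mulVec, Matrix.one_mulVec]
    simp only [Pi.smul_apply, Pi.add_apply, smul_eq_mul]
    rw [hAv]
    field_simp
  refine ⟨⟨?_, ?_⟩, ⟨?_, ?_⟩, ?_, keyD⟩
  · -- 1 is a root of charpoly (msgOp Ac)
    rw [isRoot_charpoly_iff]
    refine ⟨fun i => Real.sqrt (N i), ?_, ?_⟩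
    · intro h0
      have := congrFun h0 ⟨0, hn⟩
      simp only [Pi.zero_apply] at this
      exact absurd this (ne_of_gt (Real.sqrt_pos.2 (hN0 _)))
    · rw [one_smul]
      funext i
      have hterm : ∀ j, msgOp Ac i j * Real.sqrt (N j)
          = if c j = c i then (Real.sqrt (N i))⁻¹ else 0 := by
        intro j
        rcases eq_or_ne (c j) (c i) with h | h
        · rw [if_pos h, hMc, if_pos h.symm, hNsame j i h, mul_assoc,
            inv_mul_cancel₀ (ne_of_gt (Real.sqrt_pos.2 (hN0 i))), mul_one]
        · rw [if_neg h, hMc, if_neg (fun hh => h hh.symm), zero_mul]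
      calc (msgOp Ac *ᵥ fun i => Real.sqrt (N i)) i
          = ∑ j, msgOp Ac i j * Real.sqrt (N j) := rfl
        _ = ∑ j, if c j = c i then (Real.sqrt (N i))⁻¹ else 0 :=
            Finset.sum_congr rfl (fun j _ => hterm j)
        _ = ∑ j ∈ univ.filter (fun j => c j = c i), (Real.sqrt (N i))⁻¹ :=
            (Finset.sum_filter _ _).symm
        _ = N i * (Real.sqrt (N i))⁻¹ := by
            rw [Finset.sum_const, nsmul_eq_mul]
        _ = Real.sqrt (N i) := by
            rw [← div_eq_mul_inv, Real.div_sqrt]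
  · -- roots of charpoly (msgOp Ac) are ≤ 1
    intro μ hroot
    obtain ⟨v, hv0, hv⟩ := (isRoot_charpoly_iff _ _).1 hroot
    have hproj : msgOp Ac * msgOp Ac = msgOp Ac := by
      apply Matrix.ext
      intro i j
      rw [Matrix.mul_apply]
      rcases eq_or_ne (c i) (c j) with h | h
      · have hterm : ∀ x, msgOp Ac i x * msgOp Ac x j
            = if c x = c i then (N i)⁻¹ * (N i)⁻¹ else 0 := by
          intro x
          rcases eq_or_ne (c x) (c i) with hh | hh
          · rw [if_pos hh, hMcNN i x hh.symm, hMcNN x j (hh.trans h), hNsame x i hh]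
          · rw [if_neg hh, hMc0 i x (fun z => hh z.symm), zero_mul]
        rw [Finset.sum_congr rfl (fun x _ => hterm x), ← Finset.sum_filter,
          Finset.sum_const, nsmul_eq_mul, hMcNN i j h]
        have hne := (hN0 i).ne'
        field_simp
        rfl
      · have hterm : ∀ x, msgOp Ac i x * msgOp Ac x j = 0 := by
          intro x
          rcases eq_or_ne (c i) (c x) with hh | hh
          · rw [hMc0 x j (fun z => h (hh.trans z)), mul_zero]
          · rw [hMc0 i x hh, zero_mul]
        rw [Finset.sum_congr rfl (fun x _ => hterm x), Finset.sum_const, hMc0 i j h]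
        simp
    have h2 : μ • (μ • v) = μ • v := by
      have e1 : msgOp Ac *ᵥ (μ • v) = μ • (μ • v) := by
        rw [Matrix.mulVec_smul, hv]
      have e2 : msgOp Ac *ᵥ (μ • v) = μ • v := by
        rw [← hv, Matrix.mulVec_mulVec, hproj, hv]
      rw [← e1, e2]
    obtain ⟨k, hk⟩ := Function.ne_iff.1 hv0
    have h3 : μ * (μ * v k) = μ * v k := by
      have := congrFun h2 k
      simpa [Pi.smul_apply, smul_eq_mul] using this
    have hμ : μ * μ = μ := by
      have h4 : (μ * μ - μ) * v k = 0 := by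
        rw [sub_mul, mul_assoc, h3, sub_self]
      rcases mul_eq_zero.1 h4 with h5 | h5
      · have := sub_eq_zero.1 h5
        exact this
      · exact absurd h5 hk
    nlinarith [hμ]
  · -- 1 is a root of charpoly (msgOp A)
    rw [isRoot_charpoly_iff]
    refine ⟨fun _ => 1, ?_, ?_⟩
    · intro h0
      have := congrFun h0 ⟨0, hn⟩
      simp only [Pi.zero_apply] at this
      exact one_ne_zero this
    · rw [one_smul, hMs, Matrix.smul_mulVec, Matrix.add_mulVec, Matrix.one_mulVec]
      funext i
      simp only [Pi.smul_apply, Pi.add_apply, smul_eq_mul]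
      have hone : (A *ᵥ fun _ => (1:ℝ)) i = (s : ℝ) := by
        calc (A *ᵥ fun _ => (1:ℝ)) i = ∑ j, A i j * 1 := rfl
          _ = ∑ j, A i j := by simp
          _ = (s : ℝ) := hrowA i
      rw [hone]
      field_simp
  · -- roots of charpoly (msgOp A) are ≤ 1
    intro μ hroot
    obtain ⟨v, hv0, hv⟩ := (isRoot_charpoly_iff _ _).1 hroot
    rw [hMs] at hv
    have hv' : ∀ i, (A *ᵥ v) i + v i = ((s:ℝ)+1) * (μ * v i) := by
      intro i
      have h := congrFun hv i
      rw [Matrix.smul_mulVec, Matrix.add_mulVec, Matrix.one_mulVec] at h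
      simp only [Pi.smul_apply, Pi.add_apply, smul_eq_mul] at h
      have := hs1.ne'
      field_simp at h
      linarith [h]
    obtain ⟨i0, _, hmax⟩ := Finset.exists_max_image univ (fun i => |v i|)
      ⟨⟨0, hn⟩, Finset.mem_univ _⟩
    obtain ⟨k, hk⟩ := Function.ne_iff.1 hv0
    have hvpos : 0 < |v i0| := lt_of_lt_of_le (abs_pos.2 hk) (hmax k (Finset.mem_univ k))
    have hbound : |(A *ᵥ v) i0| ≤ (s : ℝ) * |v i0| := by
      calc |(A *ᵥ v) i0| = |∑ j, A i0 j * v j| := rfl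
        _ ≤ ∑ j, |A i0 j * v j| := Finset.abs_sum_le_sum_abs _ _
        _ ≤ ∑ j, A i0 j * |v i0| := by
            apply Finset.sum_le_sum
            intro j _
            rw [abs_mul]
            have hnn : (0:ℝ) ≤ A i0 j := by
              rcases em (G.Adj i0 j) with h | h <;>
                simp [hA, SimpleGraph.adjMatrix_apply, h]
            rw [abs_of_nonneg hnn]
            exact mul_le_mul_of_nonneg_left (hmax j (Finset.mem_univ j)) hnn
        _ = (s : ℝ) * |v i0| := by rw [← Finset.sum_mul, hrowA i0]
    have hprod : (((s:ℝ)+1) * μ - 1) * v i0 = (A *ᵥ v) i0 := by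
      have := hv' i0
      ring_nf
      ring_nf at this
      linarith [this]
    have habs : |((s:ℝ)+1) * μ - 1| * |v i0| ≤ (s : ℝ) * |v i0| := by
      rw [← abs_mul, hprod]
      exact hbound
    have h2 : |((s:ℝ)+1) * μ - 1| ≤ (s : ℝ) :=
      le_of_mul_le_mul_right (by rwa [mul_comm ((s:ℝ)) _] at habs ⊢) hvpos
    have h3 : ((s:ℝ)+1) * μ - 1 ≤ (s : ℝ) := le_trans (le_abs_self _) h2
    nlinarith [hs1]
  · -- multiplicity comparison
    rw [hermitian_charpoly_eq _ hH1, hermitian_charpoly_eq _ hH2, rootMult_prod, rootMult_prod,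
      ← finrank_eigSp _ hH1, ← finrank_eigSp _ hH2]
    apply Submodule.finrank_mono
    intro v hv
    have h1 : msgOp Ac *ᵥ v = (1:ℝ) • v := mem_eigSp.1 hv
    exact mem_eigSp.2 (keyD v h1)
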